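/- Let C be an exact inverse category, f : A → B a morphism, v : Y → B a monomorphism, and suppose P′(f)(v ∘ v*) = p ∘ p* where p : X → A is a monomorphism. Then the commutative square with horizontal arrows v* ∘ f ∘ p : X → Y (top) and f : A → B (bottom) and vertical arrows p : X → A (left) and v : Y → B (right) is a pullback square. -/

import Mathlib

open CategoryTheory CategoryTheory.Limits

universe v u

/-- An operation assigning to each morphism a morphism in the opposite direction. -/
def MorphismOp (C : Type u) [Category.{v} C] : Type (max u v) :=
  ∀ {A B : C}, (A ⟶ B) → (B ⟶ A)

variable {C : Type u} [Category.{v} C]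

/-- `s` is an involution: a contravariant endofunctor which is the identity on objects
and involutive on morphisms. -/
def IsInvolution (s : MorphismOp C) : Prop :=
  (∀ {A B D : C} (f : A ⟶ B) (g : B ⟶ D), s (f ≫ g) = s g ≫ s f) ∧
  (∀ A : C, s (𝟙 A) = 𝟙 A) ∧
  (∀ {A B : C} (f : A ⟶ B), s (s f) = f)

/-- A projection on `A` is an idempotent endomorphism fixed by the involution `s`. -/
def IsProjection (s : MorphismOp C) {A : C} (i : A ⟶ A) : Prop :=
  i ≫ i = i ∧ s i = i

/-- `g` is a Moore–Penrose generalized inverse of `f` with respect to `s`: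
`f g f = f`, `g f g = g`, `(f g)* = f g`, `(g f)* = g f`. -/
def IsMoorePenrose (s : MorphismOp C) {A B : C} (f : A ⟶ B) (g : B ⟶ A) : Prop :=
  f ≫ g ≫ f = f ∧ g ≫ f ≫ g = g ∧ s (f ≫ g) = f ≫ g ∧ s (g ≫ f) = g ≫ f

/-- `inv` makes `C` an inverse category: each morphism `f` has `inv f` as its unique
generalized inverse (`f ∘ (inv f) ∘ f = f` and `(inv f) ∘ f ∘ (inv f) = inv f`). -/
def IsInverseOp (inv : MorphismOp C) : Prop :=
  ∀ {A B : C} (f : A ⟶ B),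
    (f ≫ inv f ≫ f = f ∧ inv f ≫ f ≫ inv f = inv f) ∧
    ∀ g : B ⟶ A, f ≫ g ≫ f = f → g ≫ f ≫ g = g → g = inv f

/-- `u` is a kernel of `f`. -/
def IsKernelOf [HasZeroMorphisms C] {K A B : C} (u : K ⟶ A) (f : A ⟶ B) : Prop :=
  u ≫ f = 0 ∧ ∀ {X : C} (g : X ⟶ A), g ≫ f = 0 → ∃! h : X ⟶ K, h ≫ u = g

/-- `v` is a cokernel of `f`. -/
def IsCokernelOf [HasZeroMorphisms C] {A B Q : C} (v : B ⟶ Q) (f : A ⟶ B) : Prop :=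
  f ≫ v = 0 ∧ ∀ {X : C} (g : B ⟶ X), f ≫ g = 0 → ∃! h : Q ⟶ X, v ≫ h = g

/-- An exact category (in the sense of the paper): a category with a zero object,
kernels and cokernels, in which every monomorphism is a kernel, every epimorphism is a
cokernel, and every morphism factors as a monomorphism composed with an epimorphism. -/
structure IsExactCategory (C : Type u) [Category.{v} C] [HasZeroObject C]
    [HasZeroMorphisms C] : Prop where
  hasKernels : ∀ {A B : C} (f : A ⟶ B), ∃ (K : C) (u : K ⟶ A), IsKernelOf u f
  hasCokernels : ∀ {A B : C} (f : A ⟶ B), ∃ (Q : C) (v : B ⟶ Q), IsCokernelOf v f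
  normal : ∀ {X A : C} (u : X ⟶ A), Mono u → ∃ (B : C) (f : A ⟶ B), IsKernelOf u f
  conormal : ∀ {A B : C} (v : A ⟶ B), Epi v → ∃ (X : C) (f : X ⟶ A), IsCokernelOf v f
  monoEpiFact : ∀ {A B : C} (f : A ⟶ B),
    ∃ (I : C) (q : A ⟶ I) (p : I ⟶ B), Epi q ∧ Mono p ∧ q ≫ p = f

/-- A Baer*-structure on `C` with respect to `s`: each morphism `f` has a projection
`f′ = prj f` on its domain with `f ∘ g = 0` iff `g` factors through `f′`. -/
structure BaerStar (C : Type u) [Category.{v} C] [HasZeroObject C] [HasZeroMorphisms C]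
    (s : MorphismOp C) where
  prj : ∀ {A B : C}, (A ⟶ B) → (A ⟶ A)
  prj_isProjection : ∀ {A B : C} (f : A ⟶ B), IsProjection s (prj f)
  prj_spec : ∀ {A B X : C} (f : A ⟶ B) (g : X ⟶ A),
    g ≫ f = 0 ↔ ∃ h : X ⟶ A, g = h ≫ prj f

/-- The natural partial order on projections: `e ≤ f` iff `e = e ∘ f`. -/
def ProjLe {A : C} (e f : A ⟶ A) : Prop := f ≫ e = e

/-- `p` is the image of `g`: the smallest subobject of the codomain of `g` through
which `g` factors. -/
def IsImageOf {A B I : C} (p : I ⟶ B) (g : A ⟶ B) : Prop :=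
  Mono p ∧ (∃ t : A ⟶ I, t ≫ p = g) ∧
  ∀ {S : C} (t : A ⟶ S) (m : S ⟶ B), Mono m → t ≫ m = g → ∃ w : I ⟶ S, w ≫ m = p

/-!
Idempotents in an inverse category commute and `inv` reverses composition, so `j := v ∘ v*` is
a projection with `j′ ∘ v = 0`. Exactness makes `v` the kernel of some `g`; the projection
`g* ∘ g` satisfies `j ∘ g* ∘ g = 0`, hence lies below `j′`, so every `x` with `j′ ∘ x = 0` is
killed by `g` and factors through `v`. Thus `j′ ∘ x = 0` says exactly that `x` factors through
`v`, and `(j′ ∘ f)′ = p ∘ p*` says that `y` factors through `p` as soon as `f ∘ y` factors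
through `v`: this is the pullback property of the square of monomorphisms `p` and `v`.
-/

lemma isPullback_of_mono_of_forall_exists_comp_eq {P X Y Z : C} {fst : P ⟶ X} {snd : P ⟶ Y}
    {f : X ⟶ Z} {g : Y ⟶ Z} [Mono f] [Mono snd] (w : CommSq fst snd f g)
    (h : ∀ {T : C} (a : T ⟶ X) (b : T ⟶ Y), a ≫ f = b ≫ g → ∃ c : T ⟶ P, c ≫ snd = b) :
    IsPullback fst snd f g := by
  choose lift hlift using fun s : PullbackCone f g => h s.fst s.snd s.condition
  refine IsPullback.of_isLimit' w
    (PullbackCone.IsLimit.mk w.w lift (fun s => ?_) hlift (fun s m _ hm => ?_))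
  · rw [← cancel_mono f, Category.assoc, w.w, ← Category.assoc, hlift, s.condition]
  · rw [← cancel_mono snd, hm, hlift]

namespace IsInverseOp

variable {inv : MorphismOp C}

lemma comp_inv_comp (hinv : IsInverseOp inv) {A B : C} (f : A ⟶ B) : f ≫ inv f ≫ f = f :=
  (hinv f).1.1

lemma inv_comp_inv (hinv : IsInverseOp inv) {A B : C} (f : A ⟶ B) :
    inv f ≫ f ≫ inv f = inv f :=
  (hinv f).1.2

lemma comp_inv_comp_assoc (hinv : IsInverseOp inv) {A B Z : C} (f : A ⟶ B) (h : B ⟶ Z) :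
    f ≫ inv f ≫ f ≫ h = f ≫ h := by
  simpa only [Category.assoc] using congrArg (· ≫ h) (hinv.comp_inv_comp f)

lemma inv_comp_inv_assoc (hinv : IsInverseOp inv) {A B Z : C} (f : A ⟶ B) (h : A ⟶ Z) :
    inv f ≫ f ≫ inv f ≫ h = inv f ≫ h := by
  simpa only [Category.assoc] using congrArg (· ≫ h) (hinv.inv_comp_inv f)

lemma eq_inv (hinv : IsInverseOp inv) {A B : C} {f : A ⟶ B} {g : B ⟶ A}
    (h₁ : f ≫ g ≫ f = f) (h₂ : g ≫ f ≫ g = g) : g = inv f :=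
  (hinv f).2 g h₁ h₂

lemma inv_inv (hinv : IsInverseOp inv) {A B : C} (f : A ⟶ B) : inv (inv f) = f :=
  (hinv.eq_inv (hinv.inv_comp_inv f) (hinv.comp_inv_comp f)).symm

lemma inv_zero [HasZeroMorphisms C] (hinv : IsInverseOp inv) (A B : C) :
    inv (0 : A ⟶ B) = 0 :=
  (hinv.eq_inv (by simp) (by simp)).symm

lemma inv_eq_self_of_idem (hinv : IsInverseOp inv) {A : C} {e : A ⟶ A} (he : e ≫ e = e) :
    inv e = e :=
  (hinv.eq_inv (by rw [he, he]) (by rw [he, he])).symm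

lemma comp_inv_idem (hinv : IsInverseOp inv) {A B : C} (f : A ⟶ B) :
    (f ≫ inv f) ≫ f ≫ inv f = f ≫ inv f := by
  rw [Category.assoc, hinv.inv_comp_inv]

lemma inv_comp_idem (hinv : IsInverseOp inv) {A B : C} (f : A ⟶ B) :
    (inv f ≫ f) ≫ inv f ≫ f = inv f ≫ f := by
  rw [Category.assoc, hinv.comp_inv_comp]

/-- `h := inv (e ≫ j)` satisfies `j ≫ h ≫ e = h` by uniqueness of generalized inverses, which
makes `h` idempotent. -/
lemma inv_comp_idem_of_idem (hinv : IsInverseOp inv) {A : C} {e j : A ⟶ A} (he : e ≫ e = e)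
    (hj : j ≫ j = j) : inv (e ≫ j) ≫ inv (e ≫ j) = inv (e ≫ j) := by
  set h := inv (e ≫ j)
  have hh₁ : (e ≫ j) ≫ h ≫ e ≫ j = e ≫ j := hinv.comp_inv_comp _
  have hh₂ : h ≫ (e ≫ j) ≫ h = h := hinv.inv_comp_inv _
  have hjhe : j ≫ h ≫ e = h := by
    refine hinv.eq_inv ?_ ?_
    · calc (e ≫ j) ≫ (j ≫ h ≫ e) ≫ e ≫ j = e ≫ (j ≫ j) ≫ h ≫ (e ≫ e) ≫ j := by
            simp only [Category.assoc]
        _ = (e ≫ j) ≫ h ≫ e ≫ j := by rw [he, hj]; simp only [Category.assoc]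
        _ = e ≫ j := hh₁
    · calc (j ≫ h ≫ e) ≫ (e ≫ j) ≫ j ≫ h ≫ e = j ≫ (h ≫ (e ≫ e) ≫ (j ≫ j) ≫ h) ≫ e := by
            simp only [Category.assoc]
        _ = j ≫ h ≫ e := by rw [he, hj, ← Category.assoc e, hh₂]
  calc h ≫ h = j ≫ (h ≫ (e ≫ j) ≫ h) ≫ e := by
        conv_lhs => rw [← hjhe]
        simp only [Category.assoc]
    _ = h := by rw [hh₂, hjhe]

lemma inv_comp_of_idem (hinv : IsInverseOp inv) {A : C} {e j : A ⟶ A} (he : e ≫ e = e)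
    (hj : j ≫ j = j) : inv (e ≫ j) = e ≫ j := by
  conv_rhs => rw [← hinv.inv_inv (e ≫ j), hinv.inv_eq_self_of_idem
    (hinv.inv_comp_idem_of_idem he hj)]

lemma comp_idem_of_idem (hinv : IsInverseOp inv) {A : C} {e j : A ⟶ A} (he : e ≫ e = e)
    (hj : j ≫ j = j) : (e ≫ j) ≫ e ≫ j = e ≫ j := by
  simpa only [hinv.inv_comp_of_idem he hj] using hinv.inv_comp_idem_of_idem he hj

lemma idem_comm (hinv : IsInverseOp inv) {A : C} {e j : A ⟶ A} (he : e ≫ e = e)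
    (hj : j ≫ j = j) : e ≫ j = j ≫ e := by
  have hje : j ≫ e = inv (e ≫ j) := by
    refine hinv.eq_inv ?_ ?_
    · calc (e ≫ j) ≫ (j ≫ e) ≫ e ≫ j = e ≫ (j ≫ j) ≫ (e ≫ e) ≫ j := by
            simp only [Category.assoc]
        _ = e ≫ j := by rw [he, hj, ← Category.assoc, hinv.comp_idem_of_idem he hj]
    · calc (j ≫ e) ≫ (e ≫ j) ≫ j ≫ e = j ≫ (e ≫ e) ≫ (j ≫ j) ≫ e := by
            simp only [Category.assoc]
        _ = j ≫ e := by rw [he, hj, ← Category.assoc, hinv.comp_idem_of_idem hj he]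
  rw [hje, hinv.inv_comp_of_idem he hj]

lemma inv_comp (hinv : IsInverseOp inv) {A B D : C} (f : A ⟶ B) (g : B ⟶ D) :
    inv (f ≫ g) = inv g ≫ inv f := by
  have hcomm := hinv.idem_comm (hinv.comp_inv_idem g) (hinv.inv_comp_idem f)
  refine (hinv.eq_inv ?_ ?_).symm
  · calc (f ≫ g) ≫ (inv g ≫ inv f) ≫ f ≫ g = f ≫ ((g ≫ inv g) ≫ inv f ≫ f) ≫ g := by
          simp only [Category.assoc]
      _ = f ≫ g := by
          rw [hcomm]; simp only [Category.assoc, hinv.comp_inv_comp_assoc, hinv.comp_inv_comp]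
  · calc (inv g ≫ inv f) ≫ (f ≫ g) ≫ inv g ≫ inv f
          = inv g ≫ ((inv f ≫ f) ≫ g ≫ inv g) ≫ inv f := by
          simp only [Category.assoc]
      _ = inv g ≫ inv f := by
          rw [← hcomm]; simp only [Category.assoc, hinv.inv_comp_inv_assoc, hinv.inv_comp_inv]

end IsInverseOp

namespace BaerStar

variable [HasZeroObject C] [HasZeroMorphisms C] {inv : MorphismOp C} (Bs : BaerStar C inv)

lemma prj_idem {A B : C} (f : A ⟶ B) : Bs.prj f ≫ Bs.prj f = Bs.prj f :=
  (Bs.prj_isProjection f).1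

lemma inv_prj {A B : C} (f : A ⟶ B) : inv (Bs.prj f) = Bs.prj f :=
  (Bs.prj_isProjection f).2

lemma comp_eq_zero_iff {A B X : C} (f : A ⟶ B) (g : X ⟶ A) :
    g ≫ f = 0 ↔ g ≫ Bs.prj f = g := by
  rw [Bs.prj_spec]
  constructor
  · rintro ⟨h, rfl⟩
    rw [Category.assoc, Bs.prj_idem]
  · exact fun hg => ⟨g, hg.symm⟩

lemma prj_comp_self {A B : C} (f : A ⟶ B) : Bs.prj f ≫ f = 0 :=
  (Bs.comp_eq_zero_iff f _).2 (Bs.prj_idem f)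

lemma inv_comp_prj (hinv : IsInverseOp inv) {A B : C} (f : A ⟶ B) : inv f ≫ Bs.prj f = 0 := by
  simpa only [hinv.inv_comp, Bs.inv_prj, hinv.inv_zero] using
    congrArg (fun x => inv x) (Bs.prj_comp_self f)

lemma comp_prj_inv_comp_self (hinv : IsInverseOp inv) {A B : C} (f : A ⟶ B) :
    f ≫ Bs.prj (inv f ≫ f) = 0 := by
  have hj : inv (inv f ≫ f) = inv f ≫ f := by rw [hinv.inv_comp, hinv.inv_inv]
  have hj0 : (inv f ≫ f) ≫ Bs.prj (inv f ≫ f) = 0 := by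
    simpa only [hj] using Bs.inv_comp_prj hinv (inv f ≫ f)
  rw [← hinv.comp_inv_comp_assoc, ← Category.assoc (inv f) f, hj0, comp_zero]

lemma comp_inv_comp_eq_self_of_isKernelOf (hinv : IsInverseOp inv) {K A B T : C} {u : K ⟶ A}
    {g : A ⟶ B} (hu : IsKernelOf u g) {x : T ⟶ A} (hx : x ≫ Bs.prj (inv u ≫ u) = 0) :
    x ≫ inv u ≫ u = x := by
  have hgu : (g ≫ inv g) ≫ inv u ≫ u = 0 := by
    rw [Category.assoc, ← Category.assoc (inv g), ← hinv.inv_comp, hu.1, hinv.inv_zero,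
      zero_comp, comp_zero]
  have hle : Bs.prj (inv u ≫ u) ≫ g ≫ inv g = g ≫ inv g := by
    rw [hinv.idem_comm (Bs.prj_idem _) (hinv.comp_inv_idem g)]
    exact (Bs.comp_eq_zero_iff _ _).1 hgu
  have hxg : x ≫ g = 0 :=
    calc x ≫ g = x ≫ (g ≫ inv g) ≫ g := by rw [Category.assoc, hinv.comp_inv_comp]
      _ = x ≫ (Bs.prj (inv u ≫ u) ≫ g ≫ inv g) ≫ g := by rw [hle]
      _ = 0 := by simp only [← Category.assoc, hx, zero_comp]
  obtain ⟨w, rfl, -⟩ := hu.2 x hxg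
  rw [Category.assoc, hinv.comp_inv_comp]

end BaerStar

/-- In an exact inverse category (a Baer*-category for the canonical
involution), if `v : Y ⟶ B` is mono, `f : A ⟶ B`, and `P′(f)(v ∘ v*) = p ∘ p*` with
`p : X ⟶ A` mono, then the square with top `v* ∘ f ∘ p`, left `p`, right `v`, bottom `f`
is a pullback square. -/
theorem stmt12 [HasZeroObject C] [HasZeroMorphisms C] (inv : MorphismOp C)
    (hinv : IsInverseOp inv) (hC : IsExactCategory C) (Bs : BaerStar C inv)
    {X Y A B : C} (f : A ⟶ B) (v : Y ⟶ B) (hv : Mono v) (p : X ⟶ A) (hp : Mono p)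
    (hP : Bs.prj (f ≫ Bs.prj (inv v ≫ v)) = inv p ≫ p) :
    IsPullback (p ≫ f ≫ inv v) p v f := by
  obtain ⟨_, g, hg⟩ := hC.normal v hv
  have hpf : p ≫ f ≫ Bs.prj (inv v ≫ v) = 0 :=
    (Bs.comp_eq_zero_iff _ p).2 (by rw [hP, hinv.comp_inv_comp])
  refine isPullback_of_mono_of_forall_exists_comp_eq ⟨?_⟩ fun a b hab => ⟨b ≫ inv p, ?_⟩
  · simpa only [Category.assoc] using
      Bs.comp_inv_comp_eq_self_of_isKernelOf hinv hg (x := p ≫ f) (by rwa [Category.assoc])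
  · have hbf : b ≫ f ≫ Bs.prj (inv v ≫ v) = 0 := by
      rw [← Category.assoc, ← hab, Category.assoc, Bs.comp_prj_inv_comp_self hinv, comp_zero]
    rw [Category.assoc, ← hP]
    exact (Bs.comp_eq_zero_iff _ _).1 hbf
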